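/- Let $\kappa > \beta > 0$ and $\theta, \delta > 0$ satisfy $\theta > \frac{\beta}{\kappa - \beta}$ and $\delta > \frac{\theta}{1+\theta}$. Let $f' : (0,\infty) \to \mathbb{R}$ be measurable, bounded on $(0,1]$, and let $O_n : (0,\infty) \to \mathbb{R}$ satisfy $O^* := \sup_n \sup_a |O_n(a)| < \infty$ and $\sup_n \int_0^\infty |a^{\delta} f'(a)|^{1+\theta}\, \frac{|O_n(a)|}{n^{\kappa}}\, da \le M < \infty$ uniformly in $n$ (with the supremum over $n \ge 1$). Then $\frac{1}{n^{\kappa}} \int_0^\infty |f'(a) O_n(a)|\, da = o(n^{-\beta})$ as $n \to \infty$. -/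

import Mathlib

/-!
Split `∫₀^∞ |f' O_n|` at `1`. On `(0, 1]` the integrand is at most `Cf · O*`. On `(1, ∞)` write
`|f'| |O_n| = (a^δ |f'| |O_n|^{1/p}) (a^{-δ} |O_n|^{1/q})` with `p = 1 + θ`, `q = (1 + θ)/θ`: Hölder
bounds the first factor by the hypothesis `M n^κ` and the second by `O* ∫₁^∞ a^{-δq}`, finite since
`δq > 1`. After dividing by `n^κ` the two pieces are `O(n^{-κ})` and `O(n^{-κ/q})`, and `κ/q > β`.
-/

open MeasureTheory Filter Set

theorem lintegral_abs_mul_le_weighted_holder {α : Type*} [MeasurableSpace α] {μ : Measure α}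
    {p q : ℝ} (hpq : p.HolderConjugate q) {f w φ : α → ℝ} (hf : Measurable f)
    (hw : Measurable w) (hφ : Measurable φ) (hφ_pos : ∀ᵐ a ∂μ, 0 < φ a) :
    ∫⁻ a, ENNReal.ofReal (|f a| * |w a|) ∂μ ≤
      (∫⁻ a, ENNReal.ofReal (|φ a * f a| ^ p * |w a|) ∂μ) ^ (1 / p) *
        (∫⁻ a, ENNReal.ofReal (φ a ^ (-q) * |w a|) ∂μ) ^ (1 / q) := by
  set g : α → ENNReal := fun a => ENNReal.ofReal (|φ a * f a| * |w a| ^ (1 / p))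
  set h : α → ENNReal := fun a => ENNReal.ofReal (φ a ^ (-1 : ℝ) * |w a| ^ (1 / q))
  have hp := hpq.pos
  have hq := hpq.symm.pos
  have hsum : 1 / p + 1 / q = 1 := by simpa only [one_div] using hpq.inv_add_inv_eq_one
  have hg_pow : ∀ a, g a ^ p = ENNReal.ofReal (|φ a * f a| ^ p * |w a|) := fun a => by
    rw [ENNReal.ofReal_rpow_of_nonneg (by positivity) hp.le,
      Real.mul_rpow (abs_nonneg _) (by positivity), ← Real.rpow_mul (abs_nonneg _),
      one_div_mul_cancel hp.ne', Real.rpow_one]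
  have hh_pow : ∀ᵐ a ∂μ, h a ^ q = ENNReal.ofReal (φ a ^ (-q) * |w a|) := by
    filter_upwards [hφ_pos] with a ha
    rw [ENNReal.ofReal_rpow_of_nonneg (by positivity) hq.le,
      Real.mul_rpow (by positivity) (by positivity), ← Real.rpow_mul ha.le,
      ← Real.rpow_mul (abs_nonneg _), one_div_mul_cancel hq.ne', Real.rpow_one, neg_one_mul]
  have hgh : ∀ᵐ a ∂μ, ENNReal.ofReal (|f a| * |w a|) = (g * h) a := by
    filter_upwards [hφ_pos] with a ha
    rw [Pi.mul_apply, ← ENNReal.ofReal_mul (by positivity)]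
    congr 1
    have hw_split : |w a| ^ (1 / p) * |w a| ^ (1 / q) = |w a| := by
      rw [← Real.rpow_add' (abs_nonneg _) (by rw [hsum]; exact one_ne_zero), hsum, Real.rpow_one]
    have hφ_cancel : |φ a| * φ a ^ (-1 : ℝ) = 1 := by
      rw [abs_of_pos ha, Real.rpow_neg_one, mul_inv_cancel₀ ha.ne']
    calc |f a| * |w a| = (|φ a| * φ a ^ (-1 : ℝ)) * |f a| * (|w a| ^ (1 / p) * |w a| ^ (1 / q)) := by
          rw [hφ_cancel, hw_split, one_mul]
      _ = _ := by rw [abs_mul]; ring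
  have hg : Measurable g := by fun_prop
  have hh : Measurable h := by fun_prop
  calc ∫⁻ a, ENNReal.ofReal (|f a| * |w a|) ∂μ = ∫⁻ a, (g * h) a ∂μ := lintegral_congr_ae hgh
    _ ≤ (∫⁻ a, g a ^ p ∂μ) ^ (1 / p) * (∫⁻ a, h a ^ q ∂μ) ^ (1 / q) :=
        ENNReal.lintegral_mul_le_Lp_mul_Lq μ hpq hg.aemeasurable hh.aemeasurable
    _ = _ := by simp_rw [hg_pow]; rw [lintegral_congr_ae hh_pow]

theorem lintegral_Ioi_one_rpow_neg {r : ℝ} (hr : 1 < r) :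
    ∫⁻ a in Ioi (1 : ℝ), ENNReal.ofReal (a ^ (-r)) = ENNReal.ofReal (1 / (r - 1)) := by
  rw [← ofReal_integral_eq_lintegral_ofReal
      (integrableOn_Ioi_rpow_of_lt (by linarith) one_pos)
      ((ae_restrict_iff' measurableSet_Ioi).2 (Eventually.of_forall fun a ha =>
        Real.rpow_nonneg (zero_le_one.trans (le_of_lt ha)) _)),
    integral_Ioi_rpow_of_lt (by linarith) one_pos]
  congr 1
  rw [Real.one_rpow, neg_div, ← div_neg, neg_add', neg_neg]

theorem tendsto_natCast_rpow_mul_div_rpow_rpow {β κ s c : ℝ} (hc : 0 ≤ c) (h : β < κ * s) :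
    Tendsto (fun n : ℕ => (n : ℝ) ^ β * (c / (n : ℝ) ^ κ) ^ s) atTop (nhds 0) := by
  have hlim : Tendsto (fun n : ℕ => c ^ s * (n : ℝ) ^ (-(κ * s - β))) atTop (nhds 0) := by
    simpa only [mul_zero, Function.comp_def] using ((tendsto_rpow_neg_atTop (sub_pos.2 h)).comp
      tendsto_natCast_atTop_atTop).const_mul (c ^ s)
  refine hlim.congr' ((eventually_gt_atTop 0).mono fun n hn => ?_)
  have hn : (0 : ℝ) < n := Nat.cast_pos.2 hn
  change _ = (n : ℝ) ^ β * (c / (n : ℝ) ^ κ) ^ s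
  rw [Real.div_rpow hc (by positivity), ← Real.rpow_mul hn.le, neg_sub, Real.rpow_sub hn]
  field_simp

theorem tendsto_natCast_rpow_mul_div_rpow_add {β κ s A B D : ℝ} (hA : 0 ≤ A) (hD : 0 ≤ D)
    (hβκ : β < κ) (hβs : β < κ * s) :
    Tendsto (fun n : ℕ => (n : ℝ) ^ β * (A / (n : ℝ) ^ κ + B * (D / (n : ℝ) ^ κ) ^ s))
      atTop (nhds 0) := by
  have hnear := tendsto_natCast_rpow_mul_div_rpow_rpow (β := β) (κ := κ) (s := 1) hA
    (by rwa [mul_one])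
  have hfar := (tendsto_natCast_rpow_mul_div_rpow_rpow hD hβs).const_mul B
  simp only [Real.rpow_one] at hnear
  simpa only [mul_add, mul_left_comm _ B, mul_zero, add_zero] using hnear.add hfar

theorem lintegral_Ioi_abs_mul_le {p q δ C W : ℝ} (hpq : p.HolderConjugate q) (hδq : 1 < δ * q)
    {f w : ℝ → ℝ} (hf : Measurable f) (hw : Measurable w)
    (hfC : ∀ a ∈ Ioc (0 : ℝ) 1, |f a| ≤ C) (hwW : ∀ a, |w a| ≤ W) :
    ∫⁻ a in Ioi (0 : ℝ), ENNReal.ofReal (|f a| * |w a|) ≤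
      ENNReal.ofReal (C * W) +
        (∫⁻ a in Ioi (0 : ℝ), ENNReal.ofReal (|a ^ δ * f a| ^ p * |w a|)) ^ (1 / p) *
          ENNReal.ofReal (W / (δ * q - 1)) ^ (1 / q) := by
  have hC : 0 ≤ C := (abs_nonneg _).trans (hfC 1 ⟨one_pos, le_rfl⟩)
  have hnear : ∫⁻ a in Ioc (0 : ℝ) 1, ENNReal.ofReal (|f a| * |w a|) ≤ ENNReal.ofReal (C * W) :=
    calc ∫⁻ a in Ioc (0 : ℝ) 1, ENNReal.ofReal (|f a| * |w a|)
        ≤ ∫⁻ _ in Ioc (0 : ℝ) 1, ENNReal.ofReal (C * W) :=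
          setLIntegral_mono' measurableSet_Ioc fun a ha =>
            ENNReal.ofReal_le_ofReal (mul_le_mul (hfC a ha) (hwW a) (abs_nonneg _) hC)
      _ = ENNReal.ofReal (C * W) := by simp [Real.volume_Ioc]
  have hweight : ∫⁻ a in Ioi (1 : ℝ), ENNReal.ofReal ((a ^ δ) ^ (-q) * |w a|) ≤
      ENNReal.ofReal (W / (δ * q - 1)) :=
    calc ∫⁻ a in Ioi (1 : ℝ), ENNReal.ofReal ((a ^ δ) ^ (-q) * |w a|)
        ≤ ∫⁻ a in Ioi (1 : ℝ), ENNReal.ofReal (a ^ (-(δ * q))) * ENNReal.ofReal W := by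
          refine setLIntegral_mono' measurableSet_Ioi fun a ha => ?_
          have ha : (0 : ℝ) ≤ a := zero_le_one.trans (le_of_lt ha)
          rw [← ENNReal.ofReal_mul (by positivity), ← Real.rpow_mul ha, mul_neg]
          exact ENNReal.ofReal_le_ofReal (mul_le_mul_of_nonneg_left (hwW a) (by positivity))
      _ = ENNReal.ofReal (W / (δ * q - 1)) := by
          rw [lintegral_mul_const' _ _ ENNReal.ofReal_ne_top, lintegral_Ioi_one_rpow_neg hδq,
            ← ENNReal.ofReal_mul (one_div_nonneg.2 (by linarith)), one_div_mul_eq_div]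
  have hfar : ∫⁻ a in Ioi (1 : ℝ), ENNReal.ofReal (|f a| * |w a|) ≤
      (∫⁻ a in Ioi (0 : ℝ), ENNReal.ofReal (|a ^ δ * f a| ^ p * |w a|)) ^ (1 / p) *
        ENNReal.ofReal (W / (δ * q - 1)) ^ (1 / q) :=
    (lintegral_abs_mul_le_weighted_holder hpq hf hw (by fun_prop)
      ((ae_restrict_iff' measurableSet_Ioi).2 (Eventually.of_forall fun a ha =>
        Real.rpow_pos_of_pos (one_pos.trans ha) δ))).trans <|
      mul_le_mul' (ENNReal.rpow_le_rpow (lintegral_mono_set (Ioi_subset_Ioi zero_le_one))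
          (by simp [hpq.pos.le]))
        (ENNReal.rpow_le_rpow hweight (by simp [hpq.symm.pos.le]))
  calc ∫⁻ a in Ioi (0 : ℝ), ENNReal.ofReal (|f a| * |w a|)
      = (∫⁻ a in Ioc (0 : ℝ) 1, ENNReal.ofReal (|f a| * |w a|)) +
          ∫⁻ a in Ioi (1 : ℝ), ENNReal.ofReal (|f a| * |w a|) := by
        rw [← Ioc_union_Ioi_eq_Ioi zero_le_one,
          lintegral_union measurableSet_Ioi Ioc_disjoint_Ioi_same]
    _ ≤ _ := add_le_add hnear hfar

theorem lintegral_Ioi_abs_mul_div_le {p q δ C W m c : ℝ} (hpq : p.HolderConjugate q)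
    (hδq : 1 < δ * q) {f w : ℝ → ℝ} (hf : Measurable f) (hw : Measurable w)
    (hfC : ∀ a ∈ Ioc (0 : ℝ) 1, |f a| ≤ C) (hwW : ∀ a, |w a| ≤ W) (hc : 0 < c) (hm : 0 ≤ m)
    (hweighted : ∫⁻ a in Ioi (0 : ℝ), ENNReal.ofReal (|a ^ δ * f a| ^ p * |w a| / c) ≤
      ENNReal.ofReal m) :
    ∫⁻ a in Ioi (0 : ℝ), ENNReal.ofReal (|f a * w a| / c) ≤
      ENNReal.ofReal (C * W / c + m ^ (1 / p) * (W / (δ * q - 1) / c) ^ (1 / q)) := by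
  have hp := hpq.pos
  have hq := hpq.symm.pos
  have hC : 0 ≤ C := (abs_nonneg _).trans (hfC 1 ⟨one_pos, le_rfl⟩)
  have hW : 0 ≤ W := (abs_nonneg _).trans (hwW 0)
  have habs : ∀ a, |w a / c| = |w a| / c := fun a => by rw [abs_div, abs_of_pos hc]
  have hbound := lintegral_Ioi_abs_mul_le hpq hδq hf (hw.div_const c) hfC (W := W / c)
    fun a => by rw [habs]; exact div_le_div_of_nonneg_right (hwW a) hc.le
  calc ∫⁻ a in Ioi (0 : ℝ), ENNReal.ofReal (|f a * w a| / c)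
      = ∫⁻ a in Ioi (0 : ℝ), ENNReal.ofReal (|f a| * |w a / c|) := by
        simp only [habs, abs_mul, mul_div_assoc]
    _ ≤ ENNReal.ofReal (C * (W / c)) +
          ENNReal.ofReal m ^ (1 / p) * ENNReal.ofReal (W / c / (δ * q - 1)) ^ (1 / q) :=
        hbound.trans (by gcongr; simpa only [habs, mul_div_assoc] using hweighted)
    _ = _ := by
        have hδq' : 0 < δ * q - 1 := sub_pos.2 hδq
        rw [ENNReal.ofReal_rpow_of_nonneg hm (by positivity),
          ENNReal.ofReal_rpow_of_nonneg (by positivity) (by positivity),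
          ← ENNReal.ofReal_mul (by positivity), ← ENNReal.ofReal_add (by positivity) (by positivity),
          mul_div_assoc, div_right_comm]

theorem stmt10 (κ β θ δ : ℝ) (hβ : 0 < β) (hκβ : β < κ)
    (hθ : β / (κ - β) < θ) (hδ : θ / (1 + θ) < δ)
    (f' : ℝ → ℝ) (hf'm : Measurable f') (Cf : ℝ)
    (hfb : ∀ a ∈ Set.Ioc (0:ℝ) 1, |f' a| ≤ Cf)
    (O : ℕ → ℝ → ℝ) (hOm : ∀ n, Measurable (O n))
    (Ostar : ℝ) (hO : ∀ n a, |O n a| ≤ Ostar)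
    (M : ℝ)
    (hM : ∀ n : ℕ, 1 ≤ n → ∫⁻ a in Set.Ioi (0:ℝ),
        ENNReal.ofReal (|a ^ δ * f' a| ^ (1 + θ) * |O n a| / (n : ℝ) ^ κ) ≤
          ENNReal.ofReal M) :
    Tendsto (fun n : ℕ => ENNReal.ofReal ((n : ℝ) ^ β) *
        ∫⁻ a in Set.Ioi (0:ℝ), ENNReal.ofReal (|f' a * O n a| / (n : ℝ) ^ κ))
      atTop (nhds 0) := by
  have hθ0 : 0 < θ := (div_pos hβ (sub_pos.2 hκβ)).trans hθ
  have hpq : (1 + θ).HolderConjugate ((1 + θ) / θ) :=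
    Real.holderConjugate_iff.2 ⟨by linarith, by field_simp⟩
  have hδq : 1 < δ * ((1 + θ) / θ) :=
    (div_lt_iff₀ (by positivity)).1 (by rwa [one_div_div])
  have hβq : β < κ * (1 / ((1 + θ) / θ)) := by
    have := (div_lt_iff₀ (sub_pos.2 hκβ)).1 hθ
    rw [one_div_div, ← mul_div_assoc, lt_div_iff₀ (by positivity)]
    linarith
  have hC : 0 ≤ Cf := (abs_nonneg _).trans (hfb 1 ⟨one_pos, le_rfl⟩)
  have hOs : 0 ≤ Ostar := (abs_nonneg _).trans (hO 0 0)
  -- `M` may be negative, and then `M ^ (1 / p)` is a junk value; `m = max M 0` avoids this.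
  obtain ⟨m, hm0, hm⟩ : ∃ m : ℝ, 0 ≤ m ∧ ENNReal.ofReal m = ENNReal.ofReal M :=
    ⟨_, ENNReal.toReal_nonneg, ENNReal.ofReal_toReal ENNReal.ofReal_ne_top⟩
  have hrate := ENNReal.tendsto_ofReal (tendsto_natCast_rpow_mul_div_rpow_add
    (B := m ^ (1 / (1 + θ))) (mul_nonneg hC hOs) (div_nonneg hOs (sub_pos.2 hδq).le) hκβ hβq)
  rw [ENNReal.ofReal_zero] at hrate
  refine tendsto_of_tendsto_of_tendsto_of_le_of_le' tendsto_const_nhds hrate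
    (Eventually.of_forall fun _ => zero_le) ?_
  filter_upwards [eventually_ge_atTop 1] with n hn
  rw [ENNReal.ofReal_mul (by positivity)]
  gcongr
  exact lintegral_Ioi_abs_mul_div_le hpq hδq hf'm (hOm n) hfb (hO n) (by positivity) hm0
    (hm ▸ hM n hn)
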